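/- Let β₀ > 0, e₀ = K₁(β₀)/K₂(β₀) + 3/β₀, and J⁰(q) = e^{-β₀√(1+|q|²)}/M(β₀). Set c = -ẽ'(β₀) where ẽ(β) = K₁(β)/K₂(β) + 3/β. Then c > 0 and ∫_{ℝ³} (√(1+|q|²) - e₀)² J⁰(q) dq = c; equivalently, the function e₅(q) = c^{-1/2}(√(1+|q|²) - e₀)√(J⁰(q)) has unit L² norm on ℝ³. -/

import Mathlib

/-! With `u = √(1 + r²)`, averages against `J⁰` are radial, hence ratios of the moments
`mₖ(β) = ∫₀^∞ r² uᵏ e^{-βu} dr`. Integrating `d/dr (r u e^{-βu})` and `d/dr (r u² e^{-βu})` over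
`(0, ∞)` gives `K₂ = β m₀` and `K₁ + 3 m₀ = β m₁`, so `ẽ = m₁ / m₀`. Differentiating under the
integral sign, `mₖ' = -mₖ₊₁`, so `-ẽ' = (m₂ m₀ - m₁²) / m₀² = ∫₀^∞ r² (u - ẽ)² e^{-βu} dr / m₀`:
the variance of the energy under `J⁰`, which is positive. -/

open MeasureTheory Real Set

noncomputable def K0 (β : ℝ) : ℝ :=
  ∫ y in Set.Ioi (0:ℝ), (1 / Real.sqrt (1 + y^2)) * Real.exp (-β * Real.sqrt (1 + y^2))

noncomputable def K1 (β : ℝ) : ℝ :=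
  ∫ y in Set.Ioi (0:ℝ), Real.exp (-β * Real.sqrt (1 + y^2))

noncomputable def K2 (β : ℝ) : ℝ :=
  ∫ y in Set.Ioi (0:ℝ), ((2*y^2 + 1) / Real.sqrt (1 + y^2)) * Real.exp (-β * Real.sqrt (1 + y^2))

noncomputable def Mfun (β : ℝ) : ℝ :=
  ∫ q : EuclideanSpace ℝ (Fin 3), Real.exp (-β * Real.sqrt (1 + ‖q‖^2))

open Filter Topology

lemma setIntegral_Ioi_pos {f : ℝ → ℝ} {a b : ℝ} (hab : a ≤ b) (hf : IntegrableOn f (Ioi a))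
    (hnonneg : ∀ x ∈ Ioi a, 0 ≤ f x) (hpos : ∀ x ∈ Ioi b, 0 < f x) :
    0 < ∫ x in Ioi a, f x := by
  rw [setIntegral_pos_iff_support_of_nonneg_ae
    ((ae_restrict_iff' measurableSet_Ioi).2 (Eventually.of_forall hnonneg)) hf]
  have hsub : Ioi b ⊆ Function.support f ∩ Ioi a := fun x hx =>
    ⟨(hpos x hx).ne', lt_of_le_of_lt hab hx⟩
  exact (by simp : (0 : ENNReal) < volume (Ioi b)).trans_le (measure_mono hsub)

lemma integral_fun_norm_euclideanSpace_three (f : ℝ → ℝ) :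
    ∫ q : EuclideanSpace ℝ (Fin 3), f ‖q‖
      = 3 * volume.real (Metric.ball (0 : EuclideanSpace ℝ (Fin 3)) 1)
        * ∫ r in Ioi 0, r ^ 2 * f r := by
  simp [integral_fun_norm_addHaar volume f, mul_assoc]

namespace Juttner

noncomputable def energy (r : ℝ) : ℝ := √(1 + r ^ 2)

lemma energy_sq (r : ℝ) : energy r ^ 2 = 1 + r ^ 2 := sq_sqrt (by positivity)

lemma one_le_energy (r : ℝ) : 1 ≤ energy r :=
  one_le_sqrt.2 (by nlinarith [sq_nonneg r])

lemma energy_pos (r : ℝ) : 0 < energy r := one_pos.trans_le (one_le_energy r)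

lemma self_le_energy (r : ℝ) : r ≤ energy r :=
  le_sqrt_of_sq_le (by linarith)

@[fun_prop]
lemma continuous_energy : Continuous energy := by
  unfold energy; fun_prop

lemma hasDerivAt_energy (r : ℝ) : HasDerivAt energy (r / energy r) r := by
  refine (((hasDerivAt_pow 2 r).const_add 1).sqrt (by positivity)).congr_deriv ?_
  simp only [energy, Nat.cast_ofNat]
  field_simp
  ring

lemma tendsto_energy_atTop : Tendsto energy atTop atTop :=
  tendsto_atTop_mono self_le_energy tendsto_id

variable {β : ℝ}

lemma tendsto_pow_mul_energy_pow_mul_exp (hβ : 0 < β) (j k : ℕ) :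
    Tendsto (fun r => r ^ j * energy r ^ k * exp (-β * energy r)) atTop (𝓝 0) := by
  have hlim : Tendsto (fun r => energy r ^ (j + k) * exp (-β * energy r)) atTop (𝓝 0) := by
    have := tendsto_rpow_mul_exp_neg_mul_atTop_nhds_zero (j + k : ℕ) β hβ
    simp only [rpow_natCast] at this
    exact this.comp tendsto_energy_atTop
  refine squeeze_zero' ?_ ?_ hlim
  · filter_upwards [eventually_ge_atTop 0] with r hr
    have := energy_pos r
    positivity
  · filter_upwards [eventually_ge_atTop 0] with r hr
    have := energy_pos r
    rw [pow_add]
    gcongr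
    exact self_le_energy r

lemma integrableOn_pow_mul_energy_pow_mul_exp (hβ : 0 < β) (j k : ℕ) :
    IntegrableOn (fun r => r ^ j * energy r ^ k * exp (-β * energy r)) (Ioi 0) := by
  refine integrable_of_isBigO_exp_neg (half_pos hβ) (Continuous.continuousOn (by fun_prop))
    (Asymptotics.IsBigO.of_bound 1 ?_)
  filter_upwards [(tendsto_pow_mul_energy_pow_mul_exp (half_pos hβ) j k).eventually_le_const
    one_pos, eventually_ge_atTop 0] with r hbdd hr
  have hsplit : exp (-β * energy r) = exp (-(β / 2) * energy r) * exp (-(β / 2) * energy r) := by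
    rw [← exp_add]; ring_nf
  have hdecay : exp (-(β / 2) * energy r) ≤ exp (-(β / 2) * r) :=
    exp_le_exp.2 (by nlinarith [self_le_energy r])
  have := energy_pos r
  rw [norm_of_nonneg (by positivity), norm_of_nonneg (by positivity), one_mul, hsplit,
    ← mul_assoc]
  calc _ ≤ 1 * exp (-(β / 2) * energy r) := by gcongr
    _ ≤ exp (-(β / 2) * r) := by rwa [one_mul]

noncomputable def moment (k : ℕ) (β : ℝ) : ℝ :=
  ∫ r in Ioi 0, r ^ 2 * energy r ^ k * exp (-β * energy r)

lemma hasDerivAt_moment (hβ : 0 < β) (k : ℕ) :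
    HasDerivAt (moment k) (-moment (k + 1) β) β := by
  have hbound : ∀ r, ∀ b ∈ Metric.ball β (β / 2),
      ‖-(r ^ 2 * energy r ^ (k + 1) * exp (-b * energy r))‖
        ≤ r ^ 2 * energy r ^ (k + 1) * exp (-(β / 2) * energy r) := by
    intro r b hb
    have hb' : β / 2 < b := by
      rw [Metric.mem_ball, dist_eq, abs_lt] at hb; linarith
    have := energy_pos r
    rw [norm_neg, norm_of_nonneg (by positivity)]
    gcongr
  have hderiv : ∀ r b, HasDerivAt (fun b => r ^ 2 * energy r ^ k * exp (-b * energy r))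
      (-(r ^ 2 * energy r ^ (k + 1) * exp (-b * energy r))) b := fun r b =>
    ((((hasDerivAt_id b).neg.mul_const (energy r)).exp).const_mul
      (r ^ 2 * energy r ^ k)).congr_deriv (by simp only [Pi.neg_apply, id]; ring)
  have key := hasDerivAt_integral_of_dominated_loc_of_deriv_le (μ := volume.restrict (Ioi 0))
    (F := fun b r => r ^ 2 * energy r ^ k * exp (-b * energy r))
    (Metric.ball_mem_nhds β (half_pos hβ))
    (Eventually.of_forall fun b => (Continuous.aestronglyMeasurable (by fun_prop)))
    (integrableOn_pow_mul_energy_pow_mul_exp hβ 2 k)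
    (Continuous.aestronglyMeasurable (by fun_prop))
    (Eventually.of_forall hbound)
    (integrableOn_pow_mul_energy_pow_mul_exp (half_pos hβ) 2 (k + 1))
    (Eventually.of_forall fun r b _ => hderiv r b)
  rw [integral_neg] at key
  exact key.2

lemma integrableOn_K2_integrand (hβ : 0 < β) :
    IntegrableOn (fun r => (2 * r ^ 2 + 1) / energy r * exp (-β * energy r)) (Ioi 0) := by
  refine ((integrableOn_pow_mul_energy_pow_mul_exp hβ 0 1).const_mul 2).mono'
    (Continuous.aestronglyMeasurable ?_) (Eventually.of_forall fun r => ?_)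
  · fun_prop (disch := exact fun r => (energy_pos r).ne')
  · have := energy_pos r
    have hle : (2 * r ^ 2 + 1) / energy r ≤ 2 * energy r := by
      rw [div_le_iff₀ this]; nlinarith [energy_sq r]
    rw [norm_of_nonneg (by positivity)]
    calc _ ≤ 2 * energy r * exp (-β * energy r) := by gcongr
      _ = _ := by ring

lemma K2_eq_mul_moment_zero (hβ : 0 < β) : K2 β = β * moment 0 β := by
  -- `energy r ^ 0` (and `^ 1` below) keeps each term in the form of the integrand of a `moment`.
  have hderiv : ∀ r, HasDerivAt (fun r => r * energy r * exp (-β * energy r))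
      ((2 * r ^ 2 + 1) / energy r * exp (-β * energy r)
        - β * (r ^ 2 * energy r ^ 0 * exp (-β * energy r))) r := fun r => by
    have := energy_pos r
    refine (((hasDerivAt_id r).mul (hasDerivAt_energy r)).mul
      ((hasDerivAt_energy r).const_mul (-β)).exp).congr_deriv ?_
    simp only [id, Pi.mul_apply]
    field_simp
    linear_combination energy_sq r
  have hK2 := integrableOn_K2_integrand hβ
  have hA := (integrableOn_pow_mul_energy_pow_mul_exp hβ 2 0).const_mul β
  have h := integral_Ioi_of_hasDerivAt_of_tendsto' (fun r _ => hderiv r) (hK2.sub hA)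
    (by simpa using tendsto_pow_mul_energy_pow_mul_exp hβ 1 1)
  rw [integral_sub hK2 hA, integral_const_mul] at h
  simp only [zero_mul, sub_zero] at h
  change K2 β - β * moment 0 β = 0 at h
  linarith

lemma K1_add_three_mul_moment_zero (hβ : 0 < β) :
    K1 β + 3 * moment 0 β = β * moment 1 β := by
  have hderiv : ∀ r, HasDerivAt (fun r => r * energy r ^ 2 * exp (-β * energy r))
      (exp (-β * energy r) + 3 * (r ^ 2 * energy r ^ 0 * exp (-β * energy r))
        - β * (r ^ 2 * energy r ^ 1 * exp (-β * energy r))) r := fun r => by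
    have := energy_pos r
    refine (((hasDerivAt_id r).mul ((hasDerivAt_energy r).pow 2)).mul
      ((hasDerivAt_energy r).const_mul (-β)).exp).congr_deriv ?_
    simp only [id, Pi.mul_apply, Pi.pow_apply]
    field_simp
    linear_combination energy r * energy_sq r
  have hK1 : IntegrableOn (fun r => exp (-β * energy r)) (Ioi 0) := by
    simpa using integrableOn_pow_mul_energy_pow_mul_exp hβ 0 0
  have hA := (integrableOn_pow_mul_energy_pow_mul_exp hβ 2 0).const_mul 3
  have hB := (integrableOn_pow_mul_energy_pow_mul_exp hβ 2 1).const_mul β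
  have hK1A : IntegrableOn (fun r => exp (-β * energy r)
      + 3 * (r ^ 2 * energy r ^ 0 * exp (-β * energy r))) (Ioi 0) := hK1.add hA
  have h := integral_Ioi_of_hasDerivAt_of_tendsto' (fun r _ => hderiv r) (hK1A.sub hB)
    (by simpa using tendsto_pow_mul_energy_pow_mul_exp hβ 1 2)
  rw [integral_sub hK1A hB, integral_add hK1 hA, integral_const_mul,
    integral_const_mul] at h
  simp only [zero_mul, sub_zero] at h
  change K1 β + 3 * moment 0 β - β * moment 1 β = 0 at h
  linarith

lemma moment_pos (hβ : 0 < β) (k : ℕ) : 0 < moment k β :=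
  setIntegral_Ioi_pos le_rfl (integrableOn_pow_mul_energy_pow_mul_exp hβ 2 k)
    (fun r _ => by have := energy_pos r; positivity)
    (fun r (hr : 0 < r) => by have := energy_pos r; positivity)

lemma K1_div_K2_add_three_div_eq (hβ : 0 < β) :
    K1 β / K2 β + 3 / β = moment 1 β / moment 0 β := by
  have := moment_pos hβ 0
  rw [K2_eq_mul_moment_zero hβ, eq_sub_of_add_eq (K1_add_three_mul_moment_zero hβ)]
  field_simp
  ring

noncomputable def centralMoment (β m : ℝ) : ℝ :=
  ∫ r in Ioi 0, r ^ 2 * (energy r - m) ^ 2 * exp (-β * energy r)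

lemma centralMoment_eq (hβ : 0 < β) (m : ℝ) :
    centralMoment β m = moment 2 β - 2 * m * moment 1 β + m ^ 2 * moment 0 β := by
  have h2 := integrableOn_pow_mul_energy_pow_mul_exp hβ 2 2
  have h1 := (integrableOn_pow_mul_energy_pow_mul_exp hβ 2 1).const_mul (2 * m)
  have h0 := (integrableOn_pow_mul_energy_pow_mul_exp hβ 2 0).const_mul (m ^ 2)
  have h21 : IntegrableOn (fun r => r ^ 2 * energy r ^ 2 * exp (-β * energy r)
      - 2 * m * (r ^ 2 * energy r ^ 1 * exp (-β * energy r))) (Ioi 0) := h2.sub h1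
  rw [centralMoment, integral_congr_ae (g := fun r => r ^ 2 * energy r ^ 2 * exp (-β * energy r)
      - 2 * m * (r ^ 2 * energy r ^ 1 * exp (-β * energy r))
      + m ^ 2 * (r ^ 2 * energy r ^ 0 * exp (-β * energy r))) (Eventually.of_forall fun r => by
        dsimp only; ring),
    integral_add h21 h0, integral_sub h2 h1, integral_const_mul, integral_const_mul]
  rfl

lemma centralMoment_pos (hβ : 0 < β) (m : ℝ) : 0 < centralMoment β m := by
  have hint : IntegrableOn (fun r => r ^ 2 * (energy r - m) ^ 2 * exp (-β * energy r)) (Ioi 0) :=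
    ((((integrableOn_pow_mul_energy_pow_mul_exp hβ 2 2).sub
      ((integrableOn_pow_mul_energy_pow_mul_exp hβ 2 1).const_mul (2 * m))).add
      ((integrableOn_pow_mul_energy_pow_mul_exp hβ 2 0).const_mul (m ^ 2)))).congr_fun
      (fun r _ => by dsimp only [Pi.add_apply, Pi.sub_apply]; ring) measurableSet_Ioi
  refine setIntegral_Ioi_pos (abs_nonneg m) hint (fun r _ => by positivity) fun r hr => ?_
  have hr : |m| < r := hr
  have hm : energy r - m ≠ 0 := by
    linarith [le_abs_self m, self_le_energy r]
  have : 0 < r := (abs_nonneg m).trans_lt hr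
  positivity

lemma neg_deriv_K1_div_K2_add_three_div (hβ : 0 < β) :
    -deriv (fun b => K1 b / K2 b + 3 / b) β
      = centralMoment β (moment 1 β / moment 0 β) / moment 0 β := by
  have hA := moment_pos hβ 0
  have heq : (fun b => K1 b / K2 b + 3 / b) =ᶠ[𝓝 β] moment 1 / moment 0 :=
    eventually_of_mem (Ioi_mem_nhds hβ) fun b hb => K1_div_K2_add_three_div_eq hb
  rw [heq.deriv_eq, ((hasDerivAt_moment hβ 1).div (hasDerivAt_moment hβ 0) hA.ne').deriv,
    centralMoment_eq hβ]
  field_simp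
  ring

lemma Mfun_eq (β : ℝ) :
    Mfun β = 3 * volume.real (Metric.ball (0 : EuclideanSpace ℝ (Fin 3)) 1) * moment 0 β := by
  simp only [moment, pow_zero, mul_one]
  exact integral_fun_norm_euclideanSpace_three fun r => exp (-β * energy r)

lemma integral_mul_div_Mfun (hβ : 0 < β) (g : ℝ → ℝ) :
    ∫ q : EuclideanSpace ℝ (Fin 3), g (energy ‖q‖) * (exp (-β * energy ‖q‖) / Mfun β)
      = (∫ r in Ioi 0, r ^ 2 * g (energy r) * exp (-β * energy r)) / moment 0 β := by
  have hball : 0 < volume.real (Metric.ball (0 : EuclideanSpace ℝ (Fin 3)) 1) :=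
    ENNReal.toReal_pos (Metric.measure_ball_pos volume _ one_pos).ne' measure_ball_lt_top.ne
  have := moment_pos hβ 0
  rw [integral_fun_norm_euclideanSpace_three fun r => g (energy r) * (exp (-β * energy r) / Mfun β),
    Mfun_eq]
  simp_rw [← mul_assoc, mul_div_assoc']
  rw [integral_div]
  field_simp

end Juttner

open Juttner

theorem e5_unit_norm (β₀ : ℝ) (hβ₀ : 0 < β₀) :
    let e₀ : ℝ := K1 β₀ / K2 β₀ + 3 / β₀
    let c : ℝ := -(deriv (fun b => K1 b / K2 b + 3 / b) β₀)
    0 < c ∧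
    (∫ q : EuclideanSpace ℝ (Fin 3),
        (Real.sqrt (1 + ‖q‖^2) - e₀)^2
          * (Real.exp (-β₀ * Real.sqrt (1 + ‖q‖^2)) / Mfun β₀)) = c ∧
    (∫ q : EuclideanSpace ℝ (Fin 3),
        ((Real.sqrt c)⁻¹ * (Real.sqrt (1 + ‖q‖^2) - e₀)
          * Real.sqrt (Real.exp (-β₀ * Real.sqrt (1 + ‖q‖^2)) / Mfun β₀))^2) = 1 := by
  intro e₀ c
  have hc : c = centralMoment β₀ e₀ / moment 0 β₀ := by
    rw [show e₀ = moment 1 β₀ / moment 0 β₀ from K1_div_K2_add_three_div_eq hβ₀]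
    exact neg_deriv_K1_div_K2_add_three_div hβ₀
  have hc_pos : 0 < c := hc ▸ div_pos (centralMoment_pos hβ₀ e₀) (moment_pos hβ₀ 0)
  have hvar : ∫ q : EuclideanSpace ℝ (Fin 3),
      (energy ‖q‖ - e₀) ^ 2 * (exp (-β₀ * energy ‖q‖) / Mfun β₀) = c := by
    rw [integral_mul_div_Mfun hβ₀ fun x => (x - e₀) ^ 2, hc]
    rfl
  refine ⟨hc_pos, hvar, ?_⟩
  have hMfun : 0 ≤ Mfun β₀ := by
    rw [Mfun_eq]; exact mul_nonneg (by positivity) (moment_pos hβ₀ 0).le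
  have hsq : ∀ q : EuclideanSpace ℝ (Fin 3),
      ((√c)⁻¹ * (energy ‖q‖ - e₀) * √(exp (-β₀ * energy ‖q‖) / Mfun β₀)) ^ 2
        = c⁻¹ * ((energy ‖q‖ - e₀) ^ 2 * (exp (-β₀ * energy ‖q‖) / Mfun β₀)) := fun q => by
    rw [mul_pow, mul_pow, inv_pow, sq_sqrt hc_pos.le, sq_sqrt (by positivity)]
    ring
  calc _ = ∫ q : EuclideanSpace ℝ (Fin 3),
        c⁻¹ * ((energy ‖q‖ - e₀) ^ 2 * (exp (-β₀ * energy ‖q‖) / Mfun β₀)) :=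
        integral_congr_ae (Eventually.of_forall hsq)
    _ = 1 := by rw [integral_const_mul, hvar, inv_mul_cancel₀ hc_pos.ne']
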